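/- arXiv:1411.6503 — 4 statements merged into one kernel-verified Lean document; each statement's English description precedes it below -/
import Mathlib

section
/- Let w : ℂ → ℂ be analytic on the open unit disk, suppose w is real-valued on the real interval (−1,1) (that is, Im w(x) = 0 for every real x with |x| < 1), and let 0 < ε ≤ π. Then for every real x with |x| < 1 the value w_ε(x) = (1/(2ε)) ∫_{-ε}^{ε} w(x·e^{it}) dt is real, i.e., its imaginary part is zero. -/
/-!
By the identity theorem, `w` coincides on the disk with its reflection `z ↦ conj (w (conj z))`,
since both are holomorphic and agree on the real diameter. Hence `t ↦ w (x e^{it})` takes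
conjugate values at `t` and `-t`, and its integral over the symmetric interval `[-ε, ε]` equals
its own conjugate.
-/

open ComplexConjugate Filter Topology

theorem DifferentiableOn.conj_comp_conj_ball {w : ℂ → ℂ} {r : ℝ}
    (hw : DifferentiableOn ℂ w (Metric.ball 0 r)) :
    DifferentiableOn ℂ (conj ∘ w ∘ conj) (Metric.ball 0 r) := by
  intro z hz
  have hz' : conj z ∈ Metric.ball (0 : ℂ) r := by simpa using hz
  simpa using ((hw.differentiableAt (Metric.isOpen_ball.mem_nhds hz')).conj_conj)
    |>.differentiableWithinAt

theorem frequently_ofReal_nhdsNE_zero {p : ℂ → Prop} (h : ∀ᶠ x : ℝ in 𝓝[≠] 0, p x) :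
    ∃ᶠ z in 𝓝[≠] (0 : ℂ), p z := by
  have hofReal : Tendsto ((↑) : ℝ → ℂ) (𝓝[≠] 0) (𝓝[≠] 0) :=
    tendsto_nhdsWithin_of_tendsto_nhds_of_eventually_within _
      (Complex.continuous_ofReal.tendsto' 0 0 Complex.ofReal_zero |>.mono_left nhdsWithin_le_nhds)
      (eventually_nhdsWithin_of_forall fun x hx => by simpa using hx)
  exact hofReal.frequently h.frequently

theorem eqOn_conj_comp_conj_ball {w : ℂ → ℂ} {r : ℝ} (hr : 0 < r)
    (hw : DifferentiableOn ℂ w (Metric.ball 0 r))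
    (hreal : ∀ x : ℝ, |x| < r → (w x).im = 0) :
    Set.EqOn w (conj ∘ w ∘ conj) (Metric.ball 0 r) := by
  refine (hw.analyticOnNhd Metric.isOpen_ball).eqOn_of_preconnected_of_frequently_eq
    (hw.conj_comp_conj_ball.analyticOnNhd Metric.isOpen_ball)
    (convex_ball 0 r).isPreconnected (Metric.mem_ball_self hr) (frequently_ofReal_nhdsNE_zero ?_)
  filter_upwards [nhdsWithin_le_nhds (Ioo_mem_nhds (neg_neg_iff_pos.2 hr) hr)] with (x : ℝ) hx
  have : |x| < r := abs_lt.2 hx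
  simp [Complex.conj_eq_iff_im.2 (hreal x this)]

theorem im_intervalIntegral_eq_zero_of_map_neg_eq_conj {f : ℝ → ℂ}
    (hf : ∀ t, f (-t) = conj (f t)) (a : ℝ) : (∫ t in -a..a, f t).im = 0 := by
  refine Complex.conj_eq_iff_im.1 ?_
  rw [← intervalIntegral.intervalIntegral_conj]
  simp only [← hf, intervalIntegral.integral_comp_neg (fun t => f t), neg_neg]

theorem stmt_1_general (w : ℂ → ℂ) (hw : DifferentiableOn ℂ w (Metric.ball (0 : ℂ) 1))
    (hreal : ∀ x : ℝ, |x| < 1 → (w (x : ℂ)).im = 0)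
    (ε : ℝ) :
    ∀ x : ℝ, |x| < 1 →
      ((1 / (2 * (ε : ℂ))) *
        ∫ t in (-ε)..ε, w ((x : ℂ) * Complex.exp (Complex.I * (t : ℂ)))).im = 0 := by
  intro x hx
  have hmem : ∀ t : ℝ, (x : ℂ) * Complex.exp (Complex.I * t) ∈ Metric.ball (0 : ℂ) 1 := by
    intro t
    simpa [Complex.norm_exp, mul_comm Complex.I] using hx
  have hsymm : ∀ t : ℝ, w (x * Complex.exp (Complex.I * ↑(-t))) =
      conj (w (x * Complex.exp (Complex.I * t))) := by
    intro t
    have hrefl := eqOn_conj_comp_conj_ball one_pos hw hreal (hmem t)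
    rw [hrefl]
    simp [← Complex.exp_conj]
  have hcoef : (1 / (2 * (ε : ℂ))) = ((1 / (2 * ε) : ℝ) : ℂ) := by push_cast; ring
  rw [hcoef, Complex.im_ofReal_mul, im_intervalIntegral_eq_zero_of_map_neg_eq_conj hsymm, mul_zero]

/-- If `w` is analytic on the open unit disk, real-valued on `(-1,1)`,
and `0 < ε ≤ π`, then for every real `x` with `|x| < 1` the filtered value
`w_ε(x) = (1/(2ε)) ∫_{-ε}^{ε} w(x·e^{it}) dt` has zero imaginary part. -/
theorem stmt_1 (w : ℂ → ℂ) (hw : DifferentiableOn ℂ w (Metric.ball (0 : ℂ) 1))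
    (hreal : ∀ x : ℝ, |x| < 1 → (w (x : ℂ)).im = 0)
    (ε : ℝ) (hε : 0 < ε) (hεπ : ε ≤ Real.pi) :
    ∀ x : ℝ, |x| < 1 →
      ((1 / (2 * (ε : ℂ))) *
        ∫ t in (-ε)..ε, w ((x : ℂ) * Complex.exp (Complex.I * (t : ℂ)))).im = 0 :=
  stmt_1_general w hw hreal ε
end

section
/- Let w : ℂ → ℂ be analytic on the open unit disk with w(0) = 0, and define its logarithmic primitive W(z) = ∫_0^1 w(tz)/t dt for z in the open unit disk. Then for every z in the open unit disk and every ε with 0 < ε ≤ π, the filtered function satisfies (1/(2ε)) ∫_{-ε}^{ε} w(z·e^{it}) dt = (−i/(2ε)) · ( W(z·e^{iε}) − W(z·e^{−iε}) ). -/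
/-!
Write `w z = z * g z` with `g = dslope w 0` holomorphic on the disk, and let `F` be a primitive of
`g` on the disk (Morera). Along the ray `t ↦ t * z` the integrand `w (t * z) / t` is
`z * g (t * z)`, the derivative of `t ↦ F (t * z)`, so `W = F - F 0` on the disk. Along the arc
`t ↦ z * exp (I * t)` the derivative of `F` is `I * w (z * exp (I * t))`, so the filter integral is
`-I` times the difference of `F`, hence of `W`, at the two endpoints.
-/

open Set Metric Complex

theorem intervalIntegral.integral_deriv_mul_comp_eq_sub {F g : ℂ → ℂ} {U : Set ℂ}
    {γ γ' : ℝ → ℂ} {a b : ℝ} (hF : ∀ z ∈ U, HasDerivAt F (g z) z) (hg : ContinuousOn g U)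
    (hγ : ∀ t ∈ uIcc a b, HasDerivAt γ (γ' t) t) (hγ' : ContinuousOn γ' (uIcc a b))
    (hγU : MapsTo γ (uIcc a b) U) :
    ∫ t in a..b, γ' t * g (γ t) = F (γ b) - F (γ a) := by
  refine integral_eq_sub_of_hasDerivAt (f := fun t => F (γ t)) (fun t ht => ?_) ?_
  · exact (hF _ (hγU ht)).scomp t (hγ t ht)
  · have hγc : ContinuousOn γ (uIcc a b) := fun t ht => (hγ t ht).continuousAt.continuousWithinAt
    exact (hγ'.mul (hg.comp hγc hγU)).intervalIntegrable

section Primitive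

variable {F g : ℂ → ℂ} {R : ℝ}

theorem integral_mul_comp_ofReal_mul_eq_sub (hF : ∀ z ∈ ball 0 R, HasDerivAt F (g z) z)
    (hg : ContinuousOn g (ball 0 R)) {z : ℂ} (hz : z ∈ ball 0 R) :
    ∫ t in (0 : ℝ)..1, z * g (t * z) = F z - F 0 := by
  have h := intervalIntegral.integral_deriv_mul_comp_eq_sub (γ := fun t : ℝ => (t : ℂ) * z)
    (γ' := fun _ => z) (a := 0) (b := 1) hF hg (fun t _ => ?_) continuousOn_const ?_
  · simpa using h
  · simpa using (hasDerivAt_id (t : ℂ)).mul_const z |>.comp_ofReal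
  · intro t ht
    rw [uIcc_of_le zero_le_one] at ht
    simp only [mem_ball, dist_zero_right, norm_mul, norm_real, Real.norm_eq_abs,
      abs_of_nonneg ht.1] at hz ⊢
    nlinarith [ht.2, norm_nonneg z]

theorem integral_mul_exp_mul_comp_eq_sub (hF : ∀ z ∈ ball 0 R, HasDerivAt F (g z) z)
    (hg : ContinuousOn g (ball 0 R)) {z : ℂ} (hz : z ∈ ball 0 R) (a b : ℝ) :
    ∫ t in a..b, z * exp (I * t) * g (z * exp (I * t)) =
      -I * (F (z * exp (I * b)) - F (z * exp (I * a))) := by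
  have h := intervalIntegral.integral_deriv_mul_comp_eq_sub
    (γ := fun t : ℝ => z * exp (I * t)) (γ' := fun t => I * (z * exp (I * t)))
    (a := a) (b := b) hF hg (fun t _ => ?_) (by fun_prop) (fun t _ => ?_)
  · rw [← h, ← intervalIntegral.integral_const_mul]
    congr 1 with t
    ring_nf
    simp [I_sq]
  · simpa [mul_comm, mul_left_comm] using
      (((hasDerivAt_id (t : ℂ)).const_mul I).cexp.const_mul z).comp_ofReal
  · simpa [norm_exp] using hz

end Primitive

theorem stmt_2_general (w : ℂ → ℂ) (hw : DifferentiableOn ℂ w (Metric.ball (0 : ℂ) 1))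
    (h0 : w 0 = 0)
    (W : ℂ → ℂ)
    (hW : ∀ z ∈ Metric.ball (0 : ℂ) 1, W z = ∫ t in (0:ℝ)..1, w ((t : ℂ) * z) / (t : ℂ))
    (ε : ℝ) :
    ∀ z ∈ Metric.ball (0 : ℂ) 1,
      (1 / (2 * (ε : ℂ))) * ∫ t in (-ε)..ε, w (z * Complex.exp (Complex.I * (t : ℂ)))
        = (-Complex.I / (2 * (ε : ℂ))) *
            (W (z * Complex.exp (Complex.I * (ε : ℂ)))
              - W (z * Complex.exp (-Complex.I * (ε : ℂ)))) := by
  intro z hz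
  set g := dslope w 0
  have hg : DifferentiableOn ℂ g (ball 0 1) :=
    (differentiableOn_dslope (ball_mem_nhds 0 one_pos)).mpr hw
  have hwg (ζ : ℂ) : w ζ = ζ * g ζ := by simpa [h0] using (sub_smul_dslope w 0 ζ).symm
  obtain ⟨F, hF⟩ := hg.isExactOn_ball
  have hWF : ∀ x ∈ ball (0 : ℂ) 1, W x = F x - F 0 := by
    intro x hx
    rw [hW x hx, ← integral_mul_comp_ofReal_mul_eq_sub hF hg.continuousOn hx]
    refine intervalIntegral.integral_congr_ae (Filter.Eventually.of_forall fun t ht => ?_)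
    rw [uIoc_of_le zero_le_one] at ht
    have ht0 : (t : ℂ) ≠ 0 := ofReal_ne_zero.mpr ht.1.ne'
    rw [hwg]
    field_simp
  have harc := integral_mul_exp_mul_comp_eq_sub hF hg.continuousOn hz (-ε) ε
  simp only [← hwg, ofReal_neg, mul_neg, neg_mul] at harc ⊢
  rw [harc, hWF _ (by simpa [norm_exp] using hz), hWF _ (by simpa [norm_exp] using hz)]
  ring

/-- For `w` analytic on the open unit disk with `w(0) = 0`, with
logarithmic primitive `W(z) = ∫_0^1 w(tz)/t dt`, the filtered function satisfies
`(1/(2ε)) ∫_{-ε}^{ε} w(z·e^{it}) dt = (−i/(2ε))·(W(z·e^{iε}) − W(z·e^{−iε}))`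
for every `z` in the open unit disk and every `0 < ε ≤ π`. -/
theorem stmt_2 (w : ℂ → ℂ) (hw : DifferentiableOn ℂ w (Metric.ball (0 : ℂ) 1))
    (h0 : w 0 = 0)
    (W : ℂ → ℂ)
    (hW : ∀ z ∈ Metric.ball (0 : ℂ) 1, W z = ∫ t in (0:ℝ)..1, w ((t : ℂ) * z) / (t : ℂ))
    (ε : ℝ) (hε : 0 < ε) (hεπ : ε ≤ Real.pi) :
    ∀ z ∈ Metric.ball (0 : ℂ) 1,
      (1 / (2 * (ε : ℂ))) * ∫ t in (-ε)..ε, w (z * Complex.exp (Complex.I * (t : ℂ)))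
        = (-Complex.I / (2 * (ε : ℂ))) *
            (W (z * Complex.exp (Complex.I * (ε : ℂ)))
              - W (z * Complex.exp (-Complex.I * (ε : ℂ)))) :=
  stmt_2_general w hw h0 W hW ε
end

section
/- Let ε > 0, let a ≤ b be real numbers, and let f : ℝ → ℝ be differentiable on ℝ with derivative f′ monotone nondecreasing on [a−ε, b+ε]. Then the filtered function F(θ) = (1/(2ε)) ∫_{θ−ε}^{θ+ε} f(θ′) dθ′ is twice differentiable at every θ ∈ [a, b], with second derivative F″(θ) = ( f′(θ+ε) − f′(θ−ε) ) / (2ε) ≥ 0; in particular the sign of the second derivative (the direction of concavity) is invariant under the action of the filter. -/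
/-! Writing the window integral as `G (s + ε) - G (s - ε)` for a primitive `G` of `f` shows that
`F' s = (f (s + ε) - f (s - ε)) / (2ε)`, which is differentiable again because `f` is, with
`F'' θ = (f' (θ + ε) - f' (θ - ε)) / (2ε)`. For `θ ∈ [a, b]` both `θ ± ε` lie in `[a - ε, b + ε]`,
where `f'` is monotone, so this is nonnegative. -/

open MeasureTheory

theorem hasDerivAt_integral_sub_add {E : Type*} [NormedAddCommGroup E] [NormedSpace ℝ E]
    [CompleteSpace E] {f : ℝ → E} (hf : Continuous f) (c d s : ℝ) :
    HasDerivAt (fun s => ∫ t in (s - c)..(s + d), f t) (f (s + d) - f (s - c)) s := by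
  have hsplit : (fun s => ∫ t in (s - c)..(s + d), f t)
      = fun s => (∫ t in (0 : ℝ)..(s + d), f t) - ∫ t in (0 : ℝ)..(s - c), f t :=
    funext fun s => (intervalIntegral.integral_interval_sub_left
      (hf.intervalIntegrable _ _) (hf.intervalIntegrable _ _)).symm
  rw [hsplit]
  exact ((hf.integral_hasStrictDerivAt 0 _).hasDerivAt.comp_add_const s d).sub
    ((hf.integral_hasStrictDerivAt 0 _).hasDerivAt.comp_sub_const s c)

theorem deriv_movingAverage {f : ℝ → ℝ} (hf : Continuous f) (ε : ℝ) :
    deriv (fun s => (1 / (2 * ε)) * ∫ t in (s - ε)..(s + ε), f t)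
      = fun s => (f (s + ε) - f (s - ε)) / (2 * ε) := by
  funext s
  rw [((hasDerivAt_integral_sub_add hf ε ε s).const_mul _).deriv]
  ring

theorem stmt_9_general (ε : ℝ) (hε : 0 < ε) (a b : ℝ) (f f' : ℝ → ℝ)
    (hderiv : ∀ x : ℝ, HasDerivAt f (f' x) x)
    (hmono : MonotoneOn f' (Set.Icc (a - ε) (b + ε))) :
    ∀ θ ∈ Set.Icc a b,
      HasDerivAt (deriv (fun s : ℝ => (1 / (2 * ε)) * ∫ t in (s - ε)..(s + ε), f t))
        ((f' (θ + ε) - f' (θ - ε)) / (2 * ε)) θ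
      ∧ 0 ≤ (f' (θ + ε) - f' (θ - ε)) / (2 * ε) := by
  have hf : Continuous f := continuous_iff_continuousAt.2 fun x => (hderiv x).continuousAt
  rintro θ ⟨haθ, hθb⟩
  refine ⟨?_, div_nonneg (sub_nonneg.2 (hmono ?_ ?_ (by linarith))) (by positivity)⟩
  · rw [deriv_movingAverage hf ε]
    exact (((hderiv _).comp_add_const θ ε).sub ((hderiv _).comp_sub_const θ ε)).div_const _
  · exact ⟨by linarith, by linarith⟩
  · exact ⟨by linarith, by linarith⟩

/-- Let `ε > 0`, `a ≤ b`, and let `f` be differentiable on `ℝ` with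
derivative `f′` monotone nondecreasing on `[a−ε, b+ε]`.  Then the moving average
`F(θ) = (1/(2ε)) ∫_{θ−ε}^{θ+ε} f` is twice differentiable at every `θ ∈ [a, b]`, with
second derivative `F″(θ) = (f′(θ+ε) − f′(θ−ε)) / (2ε) ≥ 0`. -/
theorem stmt_9 (ε : ℝ) (hε : 0 < ε) (a b : ℝ) (hab : a ≤ b) (f f' : ℝ → ℝ)
    (hderiv : ∀ x : ℝ, HasDerivAt f (f' x) x)
    (hmono : MonotoneOn f' (Set.Icc (a - ε) (b + ε))) :
    ∀ θ ∈ Set.Icc a b,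
      HasDerivAt (deriv (fun s : ℝ => (1 / (2 * ε)) * ∫ t in (s - ε)..(s + ε), f t))
        ((f' (θ + ε) - f' (θ - ε)) / (2 * ε)) θ
      ∧ 0 ≤ (f' (θ + ε) - f' (θ - ε)) / (2 * ε) :=
  stmt_9_general ε hε a b f f' hderiv hmono
end

section
/- Let 0 < ε < π. Then: (i) for every integer k ≥ 1 the infinite product ∏_{n=1}^∞ sinc(kε/2^n) converges to a real number c_k(ε); (ii) for every integer m ≥ 0 the series Σ_{k=1}^∞ k^m |c_k(ε)| converges (the coefficients decay faster than any power of k); and (iii) the infinite-order scaled kernel K̄_ε(θ) = 1/(2π) + (1/π) Σ_{k=1}^∞ c_k(ε) cos(kθ) defines an infinitely differentiable (C^∞) function of θ ∈ ℝ. -/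
/-- The sinc function: `sinc x = sin x / x` for `x ≠ 0` and `sinc 0 = 1`. -/
noncomputable def sinc (x : ℝ) : ℝ := if x = 0 then 1 else Real.sin x / x

/-- The Fourier coefficient `c_k(ε) = ∏_{n=1}^∞ sinc(kε/2^n)` of the
infinite-order scaled kernel. -/
noncomputable def infKernelCoeff (ε : ℝ) (k : ℕ) : ℝ :=
  ∏' n : ℕ, sinc ((k : ℝ) * ε / 2 ^ (n + 1))

/-- The infinite-order scaled kernel with range `ε`:
`K̄_ε(θ) = 1/(2π) + (1/π) Σ_{k=1}^∞ c_k(ε) cos(kθ)`. -/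
noncomputable def infKernel (ε : ℝ) (θ : ℝ) : ℝ :=
  1 / (2 * Real.pi) +
    (1 / Real.pi) * ∑' k : ℕ, infKernelCoeff ε (k + 1) * Real.cos ((k + 1 : ℝ) * θ)

/-! Since `|sinc x - 1| ≤ x ^ 2 / 6`, the factors `sinc (a / 2 ^ n)` approach `1` geometrically
fast, so the products converge. Bounding the first `N` factors by `|sinc x| ≤ 1 / |x|` and the
others by `1` gives `|c_k(ε)| ≤ C_N k^(-N)` for every `N`, so `∑ k^m |c_k(ε)|` converges for
every `m`; these series dominate the termwise derivatives of the cosine series, which is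
therefore smooth. -/

open Finset
open scoped ContDiff

lemma sinc_eq_real_sinc : sinc = Real.sinc := rfl

lemma abs_sinc_sub_one_le (x : ℝ) : |sinc x - 1| ≤ x ^ 2 / 6 := by
  rcases eq_or_ne x 0 with rfl | hx
  · simp [sinc]
  have hx' : 0 < |x| := abs_pos.2 hx
  calc |sinc x - 1| = |x - Real.sin x| / |x| := by
        rw [sinc, if_neg hx, ← abs_div, abs_sub_comm]; congr 1; field_simp
    _ ≤ |x| ^ 3 / 6 / |x| := by gcongr; exact Real.abs_sub_sin_le x
    _ = x ^ 2 / 6 := by rw [pow_succ, sq_abs]; field_simp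

lemma multipliable_sinc_div_two_pow (a : ℝ) :
    Multipliable fun n : ℕ => sinc (a / 2 ^ (n + 1)) := by
  have hgeom : Summable fun n : ℕ => a ^ 2 / 6 * (1 / 4) ^ (n + 1) :=
    ((summable_nat_add_iff 1).2
      (summable_geometric_of_lt_one (by norm_num) (by norm_num))).mul_left _
  have hsum : Summable fun n : ℕ => sinc (a / 2 ^ (n + 1)) - 1 := by
    refine Summable.of_norm_bounded hgeom fun n => ?_
    calc ‖sinc (a / 2 ^ (n + 1)) - 1‖ ≤ (a / 2 ^ (n + 1)) ^ 2 / 6 := abs_sinc_sub_one_le _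
      _ = a ^ 2 / 6 * (1 / 4) ^ (n + 1) := by
        rw [div_pow, ← pow_mul, one_div_pow, show (2 : ℝ) ^ ((n + 1) * 2) = 4 ^ (n + 1) by
          rw [mul_comm, pow_mul]; norm_num]
        ring
  simpa using Real.multipliable_one_add_of_summable hsum

lemma norm_tprod_le_prod_norm {ι E : Type*} [SeminormedCommRing E] [NormMulClass E]
    [NormOneClass E] {f : ι → E} (hf : Multipliable f) (hf1 : ∀ i, ‖f i‖ ≤ 1) (s : Finset ι) :
    ‖∏' i, f i‖ ≤ ∏ i ∈ s, ‖f i‖ := by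
  rw [hf.norm_tprod]
  exact (prod_anti_set_of_le_one (fun i => norm_nonneg (f i)) hf1).le_of_tendsto
    hf.norm.hasProd s

lemma abs_sinc_le_inv_abs {x : ℝ} (hx : x ≠ 0) : |sinc x| ≤ |x|⁻¹ := by
  rw [sinc, if_neg hx, abs_div, div_eq_mul_inv]
  exact mul_le_of_le_one_left (by positivity) (Real.abs_sin_le_one x)

lemma abs_tprod_sinc_div_two_pow_le {a : ℝ} (ha : a ≠ 0) (N : ℕ) :
    |∏' n : ℕ, sinc (a / 2 ^ (n + 1))| ≤ (2 ^ N / |a|) ^ N := by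
  have hfactor : ∀ n ∈ range N, |sinc (a / 2 ^ (n + 1))| ≤ 2 ^ N / |a| := by
    intro n hn
    calc |sinc (a / 2 ^ (n + 1))| ≤ |a / 2 ^ (n + 1)|⁻¹ := abs_sinc_le_inv_abs (by positivity)
      _ = 2 ^ (n + 1) / |a| := by
        rw [abs_div, abs_of_pos (by positivity : (0 : ℝ) < 2 ^ (n + 1)), inv_div]
      _ ≤ 2 ^ N / |a| := by gcongr <;> [norm_num; exact mem_range.1 hn]
  calc |∏' n : ℕ, sinc (a / 2 ^ (n + 1))|
      ≤ ∏ n ∈ range N, |sinc (a / 2 ^ (n + 1))| :=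
        norm_tprod_le_prod_norm (multipliable_sinc_div_two_pow a)
          (fun n => sinc_eq_real_sinc ▸ Real.abs_sinc_le_one _) _
    _ ≤ ∏ _n ∈ range N, (2 ^ N / |a|) := prod_le_prod (fun _ _ => abs_nonneg _) hfactor
    _ = (2 ^ N / |a|) ^ N := by rw [prod_const, card_range]

lemma abs_infKernelCoeff_succ_le {ε : ℝ} (hε : ε ≠ 0) (k N : ℕ) :
    |infKernelCoeff ε (k + 1)| ≤ (2 ^ N / |ε|) ^ N / ((k : ℝ) + 1) ^ N := by
  have hk : (0 : ℝ) < k + 1 := by positivity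
  calc |infKernelCoeff ε (k + 1)| ≤ (2 ^ N / |(k + 1) * ε|) ^ N := by
        simpa [infKernelCoeff] using abs_tprod_sinc_div_two_pow_le (mul_ne_zero hk.ne' hε) N
    _ = (2 ^ N / |ε|) ^ N / ((k : ℝ) + 1) ^ N := by
        rw [abs_mul, abs_of_pos hk, ← div_pow, div_div, mul_comm]

lemma summable_succ_pow_mul_abs_of_forall_le {c : ℕ → ℝ}
    (hc : ∀ N : ℕ, ∃ C, ∀ k : ℕ, |c k| ≤ C / ((k : ℝ) + 1) ^ N) (m : ℕ) :
    Summable fun k : ℕ => ((k : ℝ) + 1) ^ m * |c k| := by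
  obtain ⟨C, hC⟩ := hc (m + 2)
  have hinvsq : Summable fun k : ℕ => C * (1 / ((k : ℝ) + 1) ^ 2) := by
    refine Summable.mul_left C ?_
    exact_mod_cast (summable_nat_add_iff 1).2 (Real.summable_one_div_nat_pow.2 one_lt_two)
  refine Summable.of_nonneg_of_le (fun k => by positivity) (fun k => ?_) hinvsq
  have hk : (0 : ℝ) < k + 1 := by positivity
  calc ((k : ℝ) + 1) ^ m * |c k| ≤ ((k : ℝ) + 1) ^ m * (C / ((k : ℝ) + 1) ^ (m + 2)) := by
        gcongr; exact hC k
    _ = C * (1 / ((k : ℝ) + 1) ^ 2) := by field_simp; ring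

lemma contDiff_tsum_mul_cos {a c : ℕ → ℝ} (hc : ∀ m : ℕ, Summable fun k => |a k| ^ m * |c k|) :
    ContDiff ℝ ∞ fun θ : ℝ => ∑' k, c k * Real.cos (a k * θ) := by
  refine contDiff_tsum (v := fun m k => |a k| ^ m * |c k|) (fun k => by fun_prop)
    (fun m _ => hc m) fun m k θ _ => ?_
  rw [norm_iteratedFDeriv_eq_norm_iteratedDeriv, iteratedDeriv_const_mul_field,
    iteratedDeriv_comp_const_mul Real.contDiff_cos, Real.norm_eq_abs, abs_mul, abs_mul, abs_pow]
  calc |c k| * (|a k| ^ m * |iteratedDeriv m Real.cos (a k * θ)|) ≤ |c k| * (|a k| ^ m * 1) := by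
        gcongr; exact Real.abs_iteratedDeriv_cos_le_one m _
    _ = |a k| ^ m * |c k| := by ring

theorem stmt_10_general (ε : ℝ) (hε : 0 < ε) :
    (∀ k : ℕ, 1 ≤ k → Multipliable (fun n : ℕ => sinc ((k : ℝ) * ε / 2 ^ (n + 1))))
    ∧ (∀ m : ℕ, Summable (fun k : ℕ => ((k + 1 : ℝ)) ^ m * |infKernelCoeff ε (k + 1)|))
    ∧ ContDiff ℝ (⊤ : ℕ∞) (infKernel ε) := by
  have hsummable : ∀ m : ℕ, Summable fun k : ℕ => ((k + 1 : ℝ)) ^ m * |infKernelCoeff ε (k + 1)| :=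
    summable_succ_pow_mul_abs_of_forall_le fun N => ⟨_, (abs_infKernelCoeff_succ_le hε.ne' · N)⟩
  refine ⟨fun k _ => multipliable_sinc_div_two_pow _, hsummable, ?_⟩
  have hseries := contDiff_tsum_mul_cos (a := fun k : ℕ => (k + 1 : ℝ))
    (c := fun k => infKernelCoeff ε (k + 1)) fun m =>
      (hsummable m).congr fun k => by rw [abs_of_pos (by positivity : (0 : ℝ) < k + 1)]
  exact contDiff_const.add (contDiff_const.mul hseries)

/-- For `0 < ε < π`: (i) the infinite products defining the coefficients
`c_k(ε)` converge; (ii) for every `m ≥ 0` the series `Σ_k k^m |c_k(ε)|` converges;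
(iii) the infinite-order scaled kernel `K̄_ε` is a `C^∞` function of `θ`. -/
theorem stmt_10 (ε : ℝ) (hε : 0 < ε) (hεπ : ε < Real.pi) :
    (∀ k : ℕ, 1 ≤ k → Multipliable (fun n : ℕ => sinc ((k : ℝ) * ε / 2 ^ (n + 1))))
    ∧ (∀ m : ℕ, Summable (fun k : ℕ => ((k + 1 : ℝ)) ^ m * |infKernelCoeff ε (k + 1)|))
    ∧ ContDiff ℝ (⊤ : ℕ∞) (infKernel ε) :=
  stmt_10_general ε hε
end
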